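/- For every Z ∈ m and every A ∈ m, S_Z(J(S_Z(A))) = ½ ⁅(exp(ad_Z) + exp(ad_{-Z}))(Υ), A⁆. -/

import Mathlib

/-!
`exp (ad Z)` is a Lie algebra automorphism (the derivation `ad Z` exponentiates to one), so
`⁅exp (±ad Z) Υ, A⁆ = exp (±ad Z) ⁅Υ, exp (∓ad Z) A⁆`. For `Z, A ∈ m` the operator `ad Z` swaps
`k` and `m`, hence `exp (∓ad Z) A = S_Z A ∓ sinh (ad Z) A` with `S_Z A ∈ m` and `sinh (ad Z) A ∈ k`.
Since `Υ` kills `k` and acts as `J` on `m`, both brackets `⁅Υ, exp (∓ad Z) A⁆` equal `J (S_Z A)`,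
and averaging the two signs turns `exp (±ad Z)` into `cosh (ad Z) = S_Z`.
-/

noncomputable section

variable {L : Type*} [NormedAddCommGroup L] [NormedSpace ℂ L] [FiniteDimensional ℂ L]

/-- The adjoint operator ad_Z = ⁅Z, ·⁆, as a continuous ℂ-linear endomorphism of L, where the
Lie bracket of L is given by the ℂ-bilinear map bra. -/
def adC (bra : L →ₗ[ℂ] L →ₗ[ℂ] L) (Z : L) : L →L[ℂ] L :=
  LinearMap.toContinuousLinearMap (bra Z)

/-- exp T = Σ_{n ≥ 0} Tⁿ/n!, the exponential in the Banach algebra of continuous ℂ-linear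
endomorphisms of L. -/
def expOp (T : L →L[ℂ] L) : L →L[ℂ] L :=
  ∑' n : ℕ, ((n.factorial : ℂ)⁻¹) • T ^ n

/-- E_Z = Σ_{n ≥ 0} ad_Z^{2n}/(2n+1)!. -/
def Eop (bra : L →ₗ[ℂ] L →ₗ[ℂ] L) (Z : L) : L →L[ℂ] L :=
  ∑' n : ℕ, (((2 * n + 1).factorial : ℂ)⁻¹) • adC bra Z ^ (2 * n)

/-- F_Z = Σ_{n ≥ 1} ad_Z^{2n-1}/(2n)!. -/
def Fop (bra : L →ₗ[ℂ] L →ₗ[ℂ] L) (Z : L) : L →L[ℂ] L :=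
  ∑' n : ℕ, (((2 * n + 2).factorial : ℂ)⁻¹) • adC bra Z ^ (2 * n + 1)

/-- S_Z = Σ_{n ≥ 0} ad_Z^{2n}/(2n)!. -/
def Sop (bra : L →ₗ[ℂ] L →ₗ[ℂ] L) (Z : L) : L →L[ℂ] L :=
  ∑' n : ℕ, (((2 * n).factorial : ℂ)⁻¹) • adC bra Z ^ (2 * n)

open NormedSpace

section Hyperbolic

variable {E : Type*} [NormedAddCommGroup E] [NormedSpace ℂ E]

def coshOp (T : E →L[ℂ] E) : E →L[ℂ] E :=
  ∑' n : ℕ, (((2 * n).factorial : ℂ)⁻¹) • T ^ (2 * n)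

def sinhOp (T : E →L[ℂ] E) : E →L[ℂ] E :=
  ∑' n : ℕ, (((2 * n + 1).factorial : ℂ)⁻¹) • T ^ (2 * n + 1)

theorem expOp_eq_exp (T : E →L[ℂ] E) : expOp T = exp T := by
  rw [exp_eq_tsum ℂ]
  rfl

theorem coshOp_neg (T : E →L[ℂ] E) : coshOp (-T) = coshOp T := by
  simp only [coshOp, (even_two_mul _).neg_pow]

theorem sinhOp_neg (T : E →L[ℂ] E) : sinhOp (-T) = -sinhOp T := by
  simp only [sinhOp, (odd_two_mul_add_one _).neg_pow, smul_neg, tsum_neg]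

variable [CompleteSpace E]

theorem exp_eq_coshOp_add_sinhOp (T : E →L[ℂ] E) : exp T = coshOp T + sinhOp T := by
  have hsum := expSeries_summable' (𝕂 := ℂ) T
  rw [exp_eq_tsum ℂ, coshOp, sinhOp]
  exact (tsum_even_add_odd (f := fun n => ((n.factorial : ℂ)⁻¹) • T ^ n)
    (hsum.comp_injective (mul_right_injective₀ two_ne_zero))
    (hsum.comp_injective fun _ _ h => by simpa using h)).symm

theorem exp_neg_eq_coshOp_sub_sinhOp (T : E →L[ℂ] E) : exp (-T) = coshOp T - sinhOp T := by
  rw [exp_eq_coshOp_add_sinhOp, coshOp_neg, sinhOp_neg, sub_eq_add_neg]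

theorem coshOp_eq_half_exp_add_exp_neg (T : E →L[ℂ] E) :
    coshOp T = (2 : ℂ)⁻¹ • (exp T + exp (-T)) := by
  rw [exp_eq_coshOp_add_sinhOp, exp_neg_eq_coshOp_sub_sinhOp, add_add_sub_cancel, ← two_smul ℂ,
    smul_smul, inv_mul_cancel₀ two_ne_zero, one_smul]

theorem exp_apply_exp_neg_apply (T : E →L[ℂ] E) (x : E) : exp T (exp (-T) x) = x := by
  have hball : ∀ S : E →L[ℂ] E, S ∈ Metric.eball 0 (expSeries ℂ (E →L[ℂ] E)).radius := fun S =>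
    (expSeries_radius_eq_top ℂ (E →L[ℂ] E)).symm ▸ edist_lt_top _ _
  rw [← mul_apply_eq_comp,
    ← exp_add_of_commute_of_mem_ball (Commute.refl T).neg_right (hball _) (hball _),
    add_neg_cancel, exp_zero, one_apply_eq_self]

end Hyperbolic

section Parity

variable {E : Type*} [NormedAddCommGroup E] [NormedSpace ℂ E]
  {D : E →L[ℂ] E} {p q : Submodule ℂ E}

theorem pow_apply_mem_of_swap (hpq : ∀ x ∈ p, D x ∈ q) (hqp : ∀ x ∈ q, D x ∈ p)
    {x : E} (hx : x ∈ p) (n : ℕ) : (D ^ (2 * n)) x ∈ p ∧ (D ^ (2 * n + 1)) x ∈ q := by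
  induction n with
  | zero => simpa using ⟨hx, hpq x hx⟩
  | succ n ih =>
    have heven : (D ^ (2 * (n + 1))) x ∈ p := by
      rw [show 2 * (n + 1) = 2 * n + 1 + 1 by ring, pow_succ', mul_apply_eq_comp]
      exact hqp _ ih.2
    refine ⟨heven, ?_⟩
    rw [pow_succ', mul_apply_eq_comp]
    exact hpq _ heven

theorem tsum_apply_mem {T : ℕ → E →L[ℂ] E} (hp : IsClosed (p : Set E)) {x : E}
    (hT : ∀ n, T n x ∈ p) : (∑' n, T n) x ∈ p :=
  tsum_mem (s := p.comap (ContinuousLinearMap.apply ℂ E x).toLinearMap)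
    (hp.preimage (ContinuousLinearMap.apply ℂ E x).continuous) hT

theorem coshOp_apply_mem (hp : IsClosed (p : Set E)) (hpq : ∀ x ∈ p, D x ∈ q)
    (hqp : ∀ x ∈ q, D x ∈ p) {x : E} (hx : x ∈ p) : coshOp D x ∈ p :=
  tsum_apply_mem hp fun n => p.smul_mem _ (pow_apply_mem_of_swap hpq hqp hx n).1

theorem sinhOp_apply_mem (hq : IsClosed (q : Set E)) (hpq : ∀ x ∈ p, D x ∈ q)
    (hqp : ∀ x ∈ q, D x ∈ p) {x : E} (hx : x ∈ p) : sinhOp D x ∈ q :=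
  tsum_apply_mem hq fun n => q.smul_mem _ (pow_apply_mem_of_swap hpq hqp hx n).2

end Parity

/-- The curve `t ↦ exp (-t c) (B (exp (t a) x) (exp (t b) y))` has derivative zero. -/
theorem exp_apply_bilinear_of_leibniz {E F G : Type*}
    [NormedAddCommGroup E] [NormedSpace ℂ E] [CompleteSpace E]
    [NormedAddCommGroup F] [NormedSpace ℂ F] [CompleteSpace F]
    [NormedAddCommGroup G] [NormedSpace ℂ G] [CompleteSpace G]
    (B : E →L[ℂ] F →L[ℂ] G) (a : E →L[ℂ] E) (b : F →L[ℂ] F) (c : G →L[ℂ] G)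
    (hB : ∀ x y, c (B x y) = B (a x) y + B x (b y)) (x : E) (y : F) :
    exp c (B x y) = B (exp a x) (exp b y) := by
  let f : ℂ → G := fun t => exp (t • -c) (B (exp (t • a) x) (exp (t • b) y))
  have hf : ∀ t, HasDerivAt f 0 t := by
    intro t
    have hx := (hasDerivAt_exp_smul_const' a t).clm_apply (hasDerivAt_const t x)
    have hy := (hasDerivAt_exp_smul_const' b t).clm_apply (hasDerivAt_const t y)
    have hxy := (B.hasFDerivAt.comp_hasDerivAt t hx).clm_apply hy
    refine ((hasDerivAt_exp_smul_const (-c) t).clm_apply hxy).congr_deriv ?_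
    simp [hB]
  have hconst := is_const_of_deriv_eq_zero (fun t => (hf t).differentiableAt)
    (fun t => (hf t).deriv) 1 0
  simp only [f, one_smul, zero_smul, exp_zero, one_apply_eq_self] at hconst
  rw [← hconst, exp_apply_exp_neg_apply]

section Grading

variable {R M : Type*} [CommRing R] [AddCommGroup M] [Module R M] {bra : M →ₗ[R] M →ₗ[R] M}

theorem bracket_swap (halt : ∀ x : M, bra x x = 0) (x y : M) : bra x y = -bra y x := by
  have h := halt (x + y)
  simp only [map_add, LinearMap.add_apply, halt x, halt y, zero_add, add_zero] at h
  exact eq_neg_of_add_eq_zero_right h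

variable {k mp mn : Submodule R M}

theorem bracket_mem_of_mem_sup (halt : ∀ x : M, bra x x = 0)
    (hpp : ∀ x ∈ mp, ∀ y ∈ mp, bra x y = 0) (hnn : ∀ x ∈ mn, ∀ y ∈ mn, bra x y = 0)
    (hpn : ∀ x ∈ mp, ∀ y ∈ mn, bra x y ∈ k)
    {x y : M} (hx : x ∈ mp ⊔ mn) (hy : y ∈ mp ⊔ mn) : bra x y ∈ k := by
  obtain ⟨xp, hxp, xn, hxn, rfl⟩ := Submodule.mem_sup.mp hx
  obtain ⟨yp, hyp, yn, hyn, rfl⟩ := Submodule.mem_sup.mp hy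
  simp only [map_add, LinearMap.add_apply, hpp xp hxp yp hyp, hnn xn hxn yn hyn, zero_add,
    add_zero]
  rw [bracket_swap halt xn yp]
  exact k.add_mem (k.neg_mem (hpn yp hyp xn hxn)) (hpn xp hxp yn hyn)

theorem bracket_mem_sup_of_mem (halt : ∀ x : M, bra x x = 0)
    (hkp : ∀ x ∈ k, ∀ y ∈ mp, bra x y ∈ mp) (hkn : ∀ x ∈ k, ∀ y ∈ mn, bra x y ∈ mn)
    {x y : M} (hx : x ∈ mp ⊔ mn) (hy : y ∈ k) :
    bra x y ∈ mp ⊔ mn := by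
  obtain ⟨xp, hxp, xn, hxn, rfl⟩ := Submodule.mem_sup.mp hx
  rw [bracket_swap halt, map_add]
  exact (mp ⊔ mn).neg_mem (Submodule.add_mem_sup (hkp y hy xp hxp) (hkn y hy xn hxn))

end Grading

section Bracket

variable (bra : L →ₗ[ℂ] L →ₗ[ℂ] L)

theorem Sop_eq_coshOp (Z : L) : Sop bra Z = coshOp (adC bra Z) := rfl

theorem adC_neg (Z : L) : adC bra (-Z) = -adC bra Z := by
  ext; simp [adC]

theorem exp_adC_apply_bracket
    (hjac : ∀ x y z : L, bra x (bra y z) = bra (bra x y) z + bra y (bra x z)) (Z x y : L) :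
    exp (adC bra Z) (bra x y) = bra (exp (adC bra Z) x) (exp (adC bra Z) y) :=
  exp_apply_bilinear_of_leibniz bra.toContinuousBilinearMap _ _ _ (hjac Z) x y

/-- `⁅exp (ad Z) Υ, A⁆ = exp (ad Z) ⁅Υ, exp (-ad Z) A⁆`, and the odd part `-sinh (ad Z) A` of
`exp (-ad Z) A` lies in `q`, which `Υ` centralizes. -/
theorem bracket_exp_adC_apply
    (hjac : ∀ x y z : L, bra x (bra y z) = bra (bra x y) z + bra y (bra x z))
    {Z Υ A : L} {p q : Submodule ℂ L} (hpq : ∀ y ∈ p, adC bra Z y ∈ q)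
    (hqp : ∀ y ∈ q, adC bra Z y ∈ p) (hΥ : ∀ y ∈ q, bra Υ y = 0) (hA : A ∈ p) :
    bra (exp (adC bra Z) Υ) A = exp (adC bra Z) (bra Υ (coshOp (adC bra Z) A)) := by
  have hsinh : sinhOp (adC bra Z) A ∈ q :=
    sinhOp_apply_mem (Submodule.closed_of_finiteDimensional q) hpq hqp hA
  calc bra (exp (adC bra Z) Υ) A
      = bra (exp (adC bra Z) Υ) (exp (adC bra Z) (exp (-adC bra Z) A)) := by
        rw [exp_apply_exp_neg_apply]
    _ = exp (adC bra Z) (bra Υ (exp (-adC bra Z) A)) := (exp_adC_apply_bracket bra hjac _ _ _).symm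
    _ = exp (adC bra Z) (bra Υ (coshOp (adC bra Z) A)) := by
        rw [exp_neg_eq_coshOp_sub_sinhOp, sub_apply, map_sub, hΥ _ hsinh, sub_zero]

end Bracket

theorem statement8_general {L : Type*} [NormedAddCommGroup L] [NormedSpace ℂ L] [FiniteDimensional ℂ L]
    (bra : L →ₗ[ℂ] L →ₗ[ℂ] L)
    (halt : ∀ x : L, bra x x = 0)
    (hjac : ∀ x y z : L, bra x (bra y z) = bra (bra x y) z + bra y (bra x z))
    (k mp mn : Submodule ℂ L)
    (hkp : ∀ x ∈ k, ∀ y ∈ mp, bra x y ∈ mp)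
    (hkn : ∀ x ∈ k, ∀ y ∈ mn, bra x y ∈ mn)
    (hpp : ∀ x ∈ mp, ∀ y ∈ mp, bra x y = 0)
    (hnn : ∀ x ∈ mn, ∀ y ∈ mn, bra x y = 0)
    (hpn : ∀ x ∈ mp, ∀ y ∈ mn, bra x y ∈ k)
    (J : L →ₗ[ℂ] L)
    (Υ : L)
    (hUk : ∀ X ∈ k, bra Υ X = 0)
    (hUm : ∀ W ∈ mp ⊔ mn, bra Υ W = J W)
    (Z A : L) (hZ : Z ∈ mp ⊔ mn) (hA : A ∈ mp ⊔ mn) :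
    Sop bra Z (J (Sop bra Z A)) =
      (2 : ℂ)⁻¹ • bra (expOp (adC bra Z) Υ + expOp (adC bra (-Z)) Υ) A := by
  have hm : IsClosed ((mp ⊔ mn : Submodule ℂ L) : Set L) := Submodule.closed_of_finiteDimensional _
  have hconj : ∀ W ∈ mp ⊔ mn,
      bra (exp (adC bra W) Υ) A = exp (adC bra W) (J (coshOp (adC bra W) A)) := by
    intro W hW
    have hmk : ∀ y ∈ mp ⊔ mn, adC bra W y ∈ k := fun y hy =>
      bracket_mem_of_mem_sup halt hpp hnn hpn hW hy
    have hkm : ∀ y ∈ k, adC bra W y ∈ mp ⊔ mn := fun y hy =>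
      bracket_mem_sup_of_mem halt hkp hkn hW hy
    rw [bracket_exp_adC_apply bra hjac hmk hkm hUk hA,
      hUm _ (coshOp_apply_mem hm hmk hkm hA)]
  rw [expOp_eq_exp, expOp_eq_exp, map_add, LinearMap.add_apply, hconj Z hZ,
    hconj (-Z) ((mp ⊔ mn).neg_mem hZ), adC_neg, coshOp_neg, ← add_apply, ← smul_apply,
    ← coshOp_eq_half_exp_add_exp_neg, Sop_eq_coshOp]

/-- For Z, A ∈ m, S_Z(J(S_Z(A))) = ½ ⁅(exp(ad_Z) + exp(ad_{-Z}))(Υ), A⁆. -/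
theorem statement8 {L : Type*} [NormedAddCommGroup L] [NormedSpace ℂ L] [FiniteDimensional ℂ L]
    (bra : L →ₗ[ℂ] L →ₗ[ℂ] L)
    (halt : ∀ x : L, bra x x = 0)
    (hjac : ∀ x y z : L, bra x (bra y z) = bra (bra x y) z + bra y (bra x z))
    (k mp mn : Submodule ℂ L)
    (hsup : k ⊔ (mp ⊔ mn) = ⊤)
    (hd1 : Disjoint k (mp ⊔ mn))
    (hd2 : Disjoint mp mn)
    (hkk : ∀ x ∈ k, ∀ y ∈ k, bra x y ∈ k)
    (hkp : ∀ x ∈ k, ∀ y ∈ mp, bra x y ∈ mp)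
    (hkn : ∀ x ∈ k, ∀ y ∈ mn, bra x y ∈ mn)
    (hpp : ∀ x ∈ mp, ∀ y ∈ mp, bra x y = 0)
    (hnn : ∀ x ∈ mn, ∀ y ∈ mn, bra x y = 0)
    (hpn : ∀ x ∈ mp, ∀ y ∈ mn, bra x y ∈ k)
    (J : L →ₗ[ℂ] L)
    (hJp : ∀ x ∈ mp, J x = Complex.I • x)
    (hJn : ∀ x ∈ mn, J x = -(Complex.I • x))
    (Υ : L)
    (hUk : ∀ X ∈ k, bra Υ X = 0)
    (hUm : ∀ W ∈ mp ⊔ mn, bra Υ W = J W)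
    (Z A : L) (hZ : Z ∈ mp ⊔ mn) (hA : A ∈ mp ⊔ mn) :
    Sop bra Z (J (Sop bra Z A)) =
      (2 : ℂ)⁻¹ • bra (expOp (adC bra Z) Υ + expOp (adC bra (-Z)) Υ) A :=
  statement8_general bra halt hjac k mp mn hkp hkn hpp hnn hpn J Υ hUk hUm Z A hZ hA
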